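/- arXiv:2112.12934 — 2 statements merged into one kernel-verified Lean document; each statement's English description precedes it below -/
import Mathlib

section
/- Let Γ ⊊ ℝ^n be an open convex cone with vertex at the origin which is invariant under permutations of the coordinates and contains the positive orthant Γ_n = {λ ∈ ℝ^n : λ_i > 0 for all i}. Then Γ ⊆ {λ ∈ ℝ^n : λ_1 + … + λ_n > 0}. -/
noncomputable section

open Filter Topology Metric Matrix MeasureTheory
open scoped Topology

/-- The quaternions. -/
abbrev Quat : Type := Quaternion ℝ

/-- Real coordinates on `ℍⁿ ≅ ℝ^{4n}`: the coordinate `(r, p)` is `x_p^r`. -/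
abbrev QS (n : ℕ) : Type := (Fin n × Fin 4) → ℝ

/-- The quaternion units `1, i, j, k`. -/
def qunit : Fin 4 → Quat := ![1, ⟨0,1,0,0⟩, ⟨0,0,1,0⟩, ⟨0,0,0,1⟩]

/-- The coefficients `1, -i, -j, -k` appearing in `∂_{q^s}`. -/
def qcunit : Fin 4 → Quat := ![1, ⟨0,-1,0,0⟩, ⟨0,0,-1,0⟩, ⟨0,0,0,-1⟩]

/-- Basis vector of `QS n` corresponding to the coordinate `x_p^r`. -/
def bvec (n : ℕ) (r : Fin n) (p : Fin 4) : QS n := Pi.single (r, p) (1 : ℝ)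

/-- Partial derivative `∂u / ∂x_p^r`. -/
def pd (n : ℕ) (u : QS n → ℝ) (r : Fin n) (p : Fin 4) (x : QS n) : ℝ :=
  fderiv ℝ u x (bvec n r p)

/-- Second partial derivative `∂²u / ∂x_p^r ∂x_q^s`. -/
def pd2 (n : ℕ) (u : QS n → ℝ) (r : Fin n) (p : Fin 4) (s : Fin n) (q : Fin 4) (x : QS n) : ℝ :=
  pd n (pd n u s q) r p x

/-- The quaternionic Hessian `u_{r̄ s} = (1/4) ∂_{q̄ʳ} ∂_{qˢ} u`. -/
def qHess (n : ℕ) (u : QS n → ℝ) (x : QS n) : Matrix (Fin n) (Fin n) Quat :=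
  Matrix.of fun r s =>
    (4 : ℝ)⁻¹ • ∑ p : Fin 4, ∑ q : Fin 4, pd2 n u r p s q x • (qunit p * qcunit q)

/-- The quaternionic Laplacian `Δu = Re tr (Hess_ℍ u)`. -/
def qLap (n : ℕ) (u : QS n → ℝ) (x : QS n) : ℝ := ∑ r, (qHess n u x r r).re

/-- The squared Euclidean norm of the gradient. -/
def gradSq (n : ℕ) (u : QS n → ℝ) (x : QS n) : ℝ := ∑ r, ∑ p, (pd n u r p x) ^ 2

/-- Euclidean norm on `ℝⁿ`. -/
def eNorm {n : ℕ} (lam : Fin n → ℝ) : ℝ := Real.sqrt (∑ i, lam i ^ 2)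

/-- A quaternionic matrix is hyperhermitian if it equals its conjugate transpose. -/
def IsHyperhermitian {n : ℕ} (A : Matrix (Fin n) (Fin n) Quat) : Prop := Aᴴ = A

/-- `lam` is the tuple of (real) eigenvalues of the hyperhermitian matrix `A`:
`A = C⋆ D C` with `C ∈ Sp(n)` and `D = diag lam`. -/
def HasEigenvalues {n : ℕ} (A : Matrix (Fin n) (Fin n) Quat) (lam : Fin n → ℝ) : Prop :=
  ∃ C : Matrix (Fin n) (Fin n) Quat, Cᴴ * C = 1 ∧
    A = Cᴴ * Matrix.diagonal (fun i => algebraMap ℝ Quat (lam i)) * C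

/-- `lam` is the tuple of eigenvalues of `B` relative to the metric `g`
(simultaneous diagonalization). -/
def HasEigenvaluesRel {n : ℕ} (g B : Matrix (Fin n) (Fin n) Quat) (lam : Fin n → ℝ) : Prop :=
  ∃ C : Matrix (Fin n) (Fin n) Quat, IsUnit C ∧ Cᴴ * g * C = 1 ∧
    Cᴴ * B * C = Matrix.diagonal (fun i => algebraMap ℝ Quat (lam i))

/-- The positive orthant `Γₙ ⊆ ℝⁿ`. -/
def Gpos (n : ℕ) : Set (Fin n → ℝ) := {lam | ∀ i, 0 < lam i}

/-- Structural conditions on the cone `Γ`. -/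
structure ConeData (n : ℕ) (Γ : Set (Fin n → ℝ)) : Prop where
  isOpen : IsOpen Γ
  convex : Convex ℝ Γ
  cone : ∀ lam ∈ Γ, ∀ t : ℝ, 0 < t → t • lam ∈ Γ
  symm : ∀ σ : Equiv.Perm (Fin n), ∀ lam ∈ Γ, (lam ∘ σ) ∈ Γ
  proper : Γ ≠ Set.univ
  pos_subset : Gpos n ⊆ Γ

/-- Structural conditions (C1), (C3) and smoothness/symmetry on the operator `f`. -/
structure OperatorData (n : ℕ) (Γ : Set (Fin n → ℝ)) (f : (Fin n → ℝ) → ℝ) : Prop where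
  smooth : ContDiffOn ℝ (⊤ : ℕ∞) f Γ
  symm : ∀ σ : Equiv.Perm (Fin n), ∀ lam ∈ Γ, f (lam ∘ σ) = f lam
  deriv_pos : ∀ lam ∈ Γ, ∀ i : Fin n, 0 < fderiv ℝ f lam (Pi.single i 1)
  concave : ConcaveOn ℝ Γ f
  rays : ∀ σ : ℝ, (∃ μ ∈ Γ, σ < f μ) → ∀ lam ∈ Γ, ∀ᶠ t : ℝ in atTop, σ < f (t • lam)

/-- `σ₀` dominates the boundary values of `f`: for every `lam₀ ∈ ∂Γ`,
eventually along `Γ` near `lam₀` one has `f < σ₀`.  This encodes `sup_{∂Γ} f ≤ σ₀`. -/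
def BoundaryBound (n : ℕ) (Γ : Set (Fin n → ℝ)) (f : (Fin n → ℝ) → ℝ) (σ₀ : ℝ) : Prop :=
  ∀ lam₀ ∈ frontier Γ, ∀ᶠ lam in 𝓝[Γ] lam₀, f lam < σ₀

/-- The superlevel set `Γ^σ = {λ ∈ Γ | f λ > σ}`. -/
def upSet (n : ℕ) (Γ : Set (Fin n → ℝ)) (f : (Fin n → ℝ) → ℝ) (σ : ℝ) : Set (Fin n → ℝ) :=
  {lam | lam ∈ Γ ∧ σ < f lam}

/-- The `C`-subsolution condition at one point: `(lam + Γₙ) ∩ ∂Γ^σ` is bounded. -/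
def CSubsolAt (n : ℕ) (Γ : Set (Fin n → ℝ)) (f : (Fin n → ℝ) → ℝ)
    (lam : Fin n → ℝ) (σ : ℝ) : Prop :=
  Bornology.IsBounded
    {μ : Fin n → ℝ | (∃ ν ∈ Gpos n, μ = lam + ν) ∧ μ ∈ frontier (upSet n Γ f σ)}

/-- `ℤ^{4n}`-periodicity: functions on the torus `ℍⁿ/ℤ^{4n}`. -/
def ZPeriodic {n : ℕ} (u : QS n → ℝ) : Prop :=
  ∀ (x : QS n) (k : Fin n × Fin 4 → ℤ), u (fun i => x i + (k i : ℝ)) = u x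

/-- `ℤ^{4n}`-periodicity for matrix-valued fields. -/
def ZPeriodicM {n : ℕ} (Ω : QS n → Matrix (Fin n) (Fin n) Quat) : Prop :=
  ∀ (x : QS n) (k : Fin n × Fin 4 → ℤ), Ω (fun i => x i + (k i : ℝ)) = Ω x

/-- Entrywise smoothness of a matrix-valued field. -/
def SmoothM {n : ℕ} (Ω : QS n → Matrix (Fin n) (Fin n) Quat) : Prop :=
  ∀ r s, ContDiff ℝ (⊤ : ℕ∞) (fun x => Ω x r s)

/-- `u` is a `C`-subsolution of `f(λ(Ω + Hess_ℍ u)) = h` (flat hyperkähler metric). -/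
def CSubsolution (n : ℕ) (Γ : Set (Fin n → ℝ)) (f : (Fin n → ℝ) → ℝ)
    (Ω : QS n → Matrix (Fin n) (Fin n) Quat) (h : QS n → ℝ) (u : QS n → ℝ) : Prop :=
  ∀ x, ∃ lam, HasEigenvalues (Ω x + qHess n u x) lam ∧ CSubsolAt n Γ f lam (h x)

/-- `φ` is a `Γ`-admissible solution of `f(λ(Ω + Hess_ℍ φ)) = h` (flat metric). -/
def AdmissibleSolution (n : ℕ) (Γ : Set (Fin n → ℝ)) (f : (Fin n → ℝ) → ℝ)
    (Ω : QS n → Matrix (Fin n) (Fin n) Quat) (h : QS n → ℝ) (φ : QS n → ℝ) : Prop :=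
  ∀ x, ∃ lam, HasEigenvalues (Ω x + qHess n φ x) lam ∧ lam ∈ Γ ∧ f lam = h x

/-- `g` is a hyperhermitian metric: pointwise hyperhermitian and positive definite. -/
def IsQMetric {n : ℕ} (g : QS n → Matrix (Fin n) (Fin n) Quat) : Prop :=
  ∀ x, IsHyperhermitian (g x) ∧
    ∀ v : Fin n → Quat, v ≠ 0 → 0 < (∑ r, ∑ s, star (v r) * g x r s * v s).re

/-- `u` is a `C`-subsolution of `f(λ_g(Ω + Hess_ℍ u)) = h`. -/
def CSubsolutionG (n : ℕ) (Γ : Set (Fin n → ℝ)) (f : (Fin n → ℝ) → ℝ)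
    (g Ω : QS n → Matrix (Fin n) (Fin n) Quat) (h : QS n → ℝ) (u : QS n → ℝ) : Prop :=
  ∀ x, ∃ lam, HasEigenvaluesRel (g x) (Ω x + qHess n u x) lam ∧ CSubsolAt n Γ f lam (h x)

/-- `φ` is a `Γ`-admissible solution of `f(λ_g(Ω + Hess_ℍ φ)) = h`. -/
def AdmissibleSolutionG (n : ℕ) (Γ : Set (Fin n → ℝ)) (f : (Fin n → ℝ) → ℝ)
    (g Ω : QS n → Matrix (Fin n) (Fin n) Quat) (h : QS n → ℝ) (φ : QS n → ℝ) : Prop :=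
  ∀ x, ∃ lam, HasEigenvaluesRel (g x) (Ω x + qHess n φ x) lam ∧ lam ∈ Γ ∧ f lam = h x

/-- Fundamental domain for the torus `ℍⁿ/ℤ^{4n}`. -/
def unitCube (n : ℕ) : Set (QS n) := {x | ∀ i, 0 ≤ x i ∧ x i < 1}

/-- Elementary symmetric polynomial `σ_k`. -/
def esymm (n k : ℕ) (lam : Fin n → ℝ) : ℝ :=
  ∑ s ∈ Finset.powersetCard k Finset.univ, ∏ i ∈ s, lam i

/-- The `k`-positive cone `Γ_k`. -/
def Gk (n k : ℕ) : Set (Fin n → ℝ) :=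
  {lam | ∀ j, 1 ≤ j → j ≤ k → 0 < esymm n j lam}

/-- Viscosity `Γ`-subsolution on `U`. -/
def ViscSubsolution (n : ℕ) (Γ : Set (Fin n → ℝ)) (U : Set (QS n)) (u : QS n → ℝ) : Prop :=
  ∀ ψ : QS n → ℝ, ContDiff ℝ 2 ψ → ∀ p ∈ U, IsLocalMaxOn (fun x => u x - ψ x) U p →
    ∃ lam, HasEigenvalues (qHess n ψ p) lam ∧ lam ∈ closure Γ

/-- Viscosity `Γ`-supersolution on `U`. -/
def ViscSupersolution (n : ℕ) (Γ : Set (Fin n → ℝ)) (U : Set (QS n)) (u : QS n → ℝ) : Prop :=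
  ∀ ψ : QS n → ℝ, ContDiff ℝ 2 ψ → ∀ p ∈ U, IsLocalMinOn (fun x => u x - ψ x) U p →
    ∃ lam, HasEigenvalues (qHess n ψ p) lam ∧ lam ∉ Γ

/-- Viscosity `Γ`-solution on `U`. -/
def ViscSolution (n : ℕ) (Γ : Set (Fin n → ℝ)) (U : Set (QS n)) (u : QS n → ℝ) : Prop :=
  ViscSubsolution n Γ U u ∧ ViscSupersolution n Γ U u
/-- The table of real components defining the real representation `ι` of `ℍ^{n×n}`:
`ι(X)` has `(p,q)` block with entries `qtbl p q (X r s)`. -/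
def qtbl : Fin 4 → Fin 4 → Quat → ℝ :=
  ![![fun x => x.re,   fun x => x.imI,  fun x => x.imJ,  fun x => x.imK],
    ![fun x => -x.imI, fun x => x.re,   fun x => -x.imK, fun x => x.imJ],
    ![fun x => -x.imJ, fun x => x.imK,  fun x => x.re,   fun x => -x.imI],
    ![fun x => -x.imK, fun x => -x.imJ, fun x => x.imI,  fun x => x.re]]

/-- The real representation `ι : ℍ^{n×n} → ℝ^{4n×4n}`. -/
def iotaM (n : ℕ) (X : Matrix (Fin n) (Fin n) Quat) :
    Matrix (Fin 4 × Fin n) (Fin 4 × Fin n) ℝ :=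
  Matrix.of fun pr qs => qtbl pr.1 qs.1 (X pr.2 qs.2)

def itbl : Matrix (Fin 4) (Fin 4) ℝ := !![0,-1,0,0; 1,0,0,0; 0,0,0,-1; 0,0,1,0]
def jtbl : Matrix (Fin 4) (Fin 4) ℝ := !![0,0,-1,0; 0,0,0,1; 1,0,0,0; 0,-1,0,0]
def ktbl : Matrix (Fin 4) (Fin 4) ℝ := !![0,0,0,-1; 0,0,-1,0; 0,1,0,0; 1,0,0,0]

/-- The standard complex structure `I₀` on `ℝ^{4n}` in block form. -/
def I0 (n : ℕ) : Matrix (Fin 4 × Fin n) (Fin 4 × Fin n) ℝ :=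
  Matrix.of fun pr qs => if pr.2 = qs.2 then itbl pr.1 qs.1 else 0

/-- The standard complex structure `J₀` on `ℝ^{4n}` in block form. -/
def J0 (n : ℕ) : Matrix (Fin 4 × Fin n) (Fin 4 × Fin n) ℝ :=
  Matrix.of fun pr qs => if pr.2 = qs.2 then jtbl pr.1 qs.1 else 0

/-- The standard complex structure `K₀` on `ℝ^{4n}` in block form. -/
def K0 (n : ℕ) : Matrix (Fin 4 × Fin n) (Fin 4 × Fin n) ℝ :=
  Matrix.of fun pr qs => if pr.2 = qs.2 then ktbl pr.1 qs.1 else 0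

/-- The subspace `V = {H | I₀HI₀ = J₀HJ₀ = K₀HK₀ = -H}` of `ℝ^{4n×4n}`. -/
def Vset (n : ℕ) : Set (Matrix (Fin 4 × Fin n) (Fin 4 × Fin n) ℝ) :=
  {H | I0 n * H * I0 n = -H ∧ J0 n * H * J0 n = -H ∧ K0 n * H * K0 n = -H}

/-- The projection `p(H) = (1/4)(H - I₀HI₀ - J₀HJ₀ - K₀HK₀)`. -/
def projV (n : ℕ) (H : Matrix (Fin 4 × Fin n) (Fin 4 × Fin n) ℝ) :
    Matrix (Fin 4 × Fin n) (Fin 4 × Fin n) ℝ :=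
  (4 : ℝ)⁻¹ • (H - I0 n * H * I0 n - J0 n * H * J0 n - K0 n * H * K0 n)

/-- The matrix `Ω₁ + (1/(n-1))((Δφ)·Id - Hess_ℍ φ)` of the quaternionic Monge-Ampère
equation for `(n-1)`-quaternionic plurisubharmonic functions. -/
def Bmat (n : ℕ) (Ω₁ : QS n → Matrix (Fin n) (Fin n) Quat) (φ : QS n → ℝ) (x : QS n) :
    Matrix (Fin n) (Fin n) Quat :=
  Ω₁ x + ((n : ℝ) - 1)⁻¹ • (qLap n φ x • (1 : Matrix (Fin n) (Fin n) Quat) - qHess n φ x)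

/-- The linear map `T(λ)_k = (1/(n-1)) Σ_{i ≠ k} λ_i`. -/
def Tmap (n : ℕ) (lam : Fin n → ℝ) : Fin n → ℝ :=
  fun k => ((n : ℝ) - 1)⁻¹ * ∑ i ∈ Finset.univ.erase k, lam i

/-- Inclusion `ℍ^m → ℍ^{m+1}`, extending by `0` in the last quaternionic variable. -/
def qext (m : ℕ) (x : QS m) : QS (m + 1) :=
  fun ip => if h : (ip.1 : ℕ) < m then x (⟨ip.1, h⟩, ip.2) else 0

/-- The space of real components of a quaternionic `n×n` matrix. -/
abbrev MSpace (n : ℕ) : Type := Fin n → Fin n → Fin 4 → ℝ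

/-- Real components of a quaternionic matrix. -/
def toComp {n : ℕ} (M : Matrix (Fin n) (Fin n) Quat) : MSpace n :=
  fun r s => ![(M r s).re, (M r s).imI, (M r s).imJ, (M r s).imK]

/-- The quaternionic partial derivative `F^{rs} = ∂F/∂A⁰_{rs} + (∂F/∂A¹_{rs})i
 + (∂F/∂A²_{rs})j + (∂F/∂A³_{rs})k`. -/
def qpartial {n : ℕ} (F : MSpace n → ℝ) (A : MSpace n) (r s : Fin n) : Quat :=
  ∑ p : Fin 4, (fderiv ℝ F A (Pi.single r (Pi.single s (Pi.single p (1 : ℝ))))) • qunit p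


/-! If some `λ ∈ Γ` had `∑ λᵢ ≤ 0`, averaging its cyclic shifts (convexity and symmetry) would
put the constant vector with entries `(∑ λᵢ)/n ≤ 0` in `Γ`; moving it slightly along `-(1,…,1)`
(openness) and rescaling (cone) gives `-(1,…,1) ∈ Γ`. A convex cone is closed under addition, so
any `x = (x + T·(1,…,1)) + T·(-(1,…,1))` with `T` large lies in `Γₙ + Γ ⊆ Γ`, and `Γ` is not
proper. -/

section ConvexCone

variable {E : Type*} [AddCommGroup E] [Module ℝ E]

theorem Convex.add_mem_of_smul_mem {s : Set E} (hconv : Convex ℝ s)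
    (hcone : ∀ x ∈ s, ∀ t : ℝ, 0 < t → t • x ∈ s) {x y : E} (hx : x ∈ s) (hy : y ∈ s) :
    x + y ∈ s := by
  have hmid : (2 : ℝ)⁻¹ • x + (2 : ℝ)⁻¹ • y ∈ s :=
    hconv hx hy (by norm_num) (by norm_num) (by norm_num)
  convert hcone _ hmid 2 two_pos using 1
  rw [smul_add, smul_inv_smul₀ two_ne_zero, smul_inv_smul₀ two_ne_zero]

theorem IsOpen.exists_pos_sub_smul_mem [TopologicalSpace E] [ContinuousSMul ℝ E]
    [ContinuousSub E] {s : Set E} (hs : IsOpen s) {p : E} (hp : p ∈ s) (v : E) :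
    ∃ t : ℝ, 0 < t ∧ p - t • v ∈ s := by
  have hcont : Continuous fun t : ℝ => p - t • v := by fun_prop
  have hnear : ∀ᶠ t : ℝ in 𝓝[>] 0, p - t • v ∈ s :=
    nhdsWithin_le_nhds <| hcont.continuousAt.eventually_mem <| by simpa using hs.mem_nhds hp
  exact (hnear.and self_mem_nhdsWithin).exists.imp fun _ ht => ⟨ht.2, ht.1⟩

end ConvexCone

section SymmetricCone

variable {n : ℕ} {Γ : Set (Fin n → ℝ)}

theorem const_mean_mem_of_perm_invariant (hconv : Convex ℝ Γ)
    (hsymm : ∀ σ : Equiv.Perm (Fin n), ∀ lam ∈ Γ, lam ∘ σ ∈ Γ) {lam : Fin n → ℝ}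
    (hlam : lam ∈ Γ) : (fun _ => (∑ i, lam i) / n) ∈ Γ := by
  obtain _ | m := n
  · -- `Fin 0 → ℝ` is a single point, so the junk mean `0 / 0` is harmless
    convert hlam using 1
  have havg : ∑ k : Fin (m + 1), ((m + 1 : ℕ) : ℝ)⁻¹ • (lam ∘ Equiv.addRight k) ∈ Γ :=
    hconv.sum_mem (fun _ _ => by positivity) (by
      rw [Finset.sum_const, Finset.card_univ, Fintype.card_fin, nsmul_eq_mul]
      exact mul_inv_cancel₀ (by positivity))
      (fun k _ => hsymm (Equiv.addRight k) lam hlam)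
  convert havg using 1
  funext i
  simp only [Finset.sum_apply, Pi.smul_apply, Function.comp_apply, Equiv.coe_addRight,
    smul_eq_mul, ← Finset.mul_sum]
  rw [div_eq_inv_mul, ← Equiv.sum_comp (Equiv.addLeft i) lam]
  rfl

theorem neg_one_mem_of_const_nonpos_mem (hopen : IsOpen Γ)
    (hcone : ∀ lam ∈ Γ, ∀ t : ℝ, 0 < t → t • lam ∈ Γ) {c : ℝ} (hc : c ≤ 0)
    (hcΓ : (fun _ => c) ∈ Γ) : (fun _ => -1) ∈ Γ := by
  obtain ⟨t, ht, hmem⟩ := hopen.exists_pos_sub_smul_mem hcΓ (fun _ => 1)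
  convert hcone _ hmem (t - c)⁻¹ (by rw [inv_pos]; linarith) using 1
  funext i
  have : t - c ≠ 0 := by linarith
  simp only [Pi.smul_apply, Pi.sub_apply, smul_eq_mul, mul_one]
  field_simp
  ring

theorem eq_univ_of_neg_one_mem (hconv : Convex ℝ Γ)
    (hcone : ∀ lam ∈ Γ, ∀ t : ℝ, 0 < t → t • lam ∈ Γ) (hpos : Gpos n ⊆ Γ)
    (hneg : (fun _ => -1) ∈ Γ) : Γ = Set.univ := by
  refine Set.eq_univ_of_forall fun x => ?_
  set T : ℝ := 1 + ∑ i, |x i|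
  have hT : 0 < T := by positivity
  have hshift : (fun i => x i + T) ∈ Gpos n := fun i => by
    have := Finset.single_le_sum (fun j _ => abs_nonneg (x j)) (Finset.mem_univ i)
    linarith [neg_abs_le (x i)]
  convert hconv.add_mem_of_smul_mem hcone (hpos hshift) (hcone _ hneg T hT) using 1
  funext i
  simp

end SymmetricCone

/-- every proper symmetric open convex cone containing the positive
orthant is contained in the half-space `{λ | λ₁ + ⋯ + λₙ > 0}`. -/
theorem statement17 (n : ℕ) (Γ : Set (Fin n → ℝ)) (hΓ : ConeData n Γ) :
    Γ ⊆ {lam : Fin n → ℝ | 0 < ∑ i, lam i} := by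
  intro lam hlam
  by_contra hsum
  have hmean : (∑ i, lam i) / n ≤ 0 :=
    div_nonpos_of_nonpos_of_nonneg (not_lt.mp hsum) n.cast_nonneg
  have hneg : (fun _ => -1) ∈ Γ := neg_one_mem_of_const_nonpos_mem hΓ.isOpen hΓ.cone hmean
    (const_mean_mem_of_perm_invariant hΓ.convex hΓ.symm hlam)
  exact hΓ.proper (eq_univ_of_neg_one_mem hΓ.convex hΓ.cone hΓ.pos_subset hneg)
end
end

section
/- Let n ≥ 2, let T : ℝ^n → ℝ^n be the linear map T(λ)_k = (1/(n−1))·Σ_{i≠k} λ_i, and set Γ = T^{−1}(Γ_n) and f(λ) = log(∏_{k=1}^n T(λ)_k) for λ ∈ Γ. Then: Γ is an open convex cone in ℝ^n with vertex at the origin, proper, invariant under permutations of coordinates, and contains Γ_n; f is smooth and symmetric on Γ with ∂f/∂λ_i > 0 for each i; f is concave on Γ; f(λ) → −∞ as λ approaches any boundary point of Γ (so sup_{∂Γ} f = −∞); and for every λ ∈ Γ, f(tλ) → +∞ as t → ∞. -/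
noncomputable section

open Filter Topology Metric Matrix MeasureTheory
open scoped Topology

/-! On the orthant, `log ∏ₖ xₖ = ∑ₖ log xₖ` is a sum of concave functions, and `f` is its pullback
along the linear map `T`, so `f` is concave and `f(tλ) = n log t + f(λ)`. Continuity of `T` sends
`∂Γ` into the boundary of the orthant, where the product vanishes and its logarithm tends to `-∞`.
Finally `∂f/∂λᵢ = (n-1)⁻¹ ∑_{k ≠ i} T(λ)ₖ⁻¹` is a nonempty sum of positive terms. -/

lemma concaveOn_finset_sum {E ι : Type*} [AddCommGroup E] [Module ℝ E] {t : Finset ι}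
    {s : Set E} (hs : Convex ℝ s) {f : ι → E → ℝ} (h : ∀ i ∈ t, ConcaveOn ℝ s (f i)) :
    ConcaveOn ℝ s (fun x => ∑ i ∈ t, f i x) := by
  classical
  induction t using Finset.cons_induction with
  | empty => simpa using concaveOn_const 0 hs
  | cons a t _ ih =>
    simp only [Finset.sum_cons]
    exact (h a (Finset.mem_cons_self a t)).add (ih fun i hi => h i (Finset.mem_cons_of_mem hi))

section Orthant

variable {n : ℕ}

lemma Gpos_eq_pi : Gpos n = Set.univ.pi fun _ => Set.Ioi 0 := by
  ext; simp [Gpos]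

lemma isOpen_Gpos : IsOpen (Gpos n) := by
  rw [Gpos_eq_pi]; exact isOpen_set_pi Set.finite_univ fun _ _ => isOpen_Ioi

lemma convex_Gpos : Convex ℝ (Gpos n) := by
  rw [Gpos_eq_pi]; exact convex_pi fun _ _ => convex_Ioi 0

lemma smul_mem_Gpos {t : ℝ} (ht : 0 < t) {x : Fin n → ℝ} (hx : x ∈ Gpos n) : t • x ∈ Gpos n :=
  fun i => mul_pos ht (hx i)

lemma comp_perm_mem_Gpos (σ : Equiv.Perm (Fin n)) {x : Fin n → ℝ} (hx : x ∈ Gpos n) :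
    x ∘ σ ∈ Gpos n :=
  fun i => hx (σ i)

lemma exists_eq_zero_of_mem_frontier_Gpos {x : Fin n → ℝ} (hx : x ∈ frontier (Gpos n)) :
    ∃ i, x i = 0 := by
  have hnonneg : ∀ i, 0 ≤ x i := fun i =>
    closure_minimal (fun y (hy : y ∈ Gpos n) => (hy i).le)
      (isClosed_le continuous_const (continuous_apply i)) hx.1
  have hnotpos : x ∉ Gpos n := by
    simpa [isOpen_Gpos.interior_eq] using hx.2
  by_contra! hne
  exact hnotpos fun i => (hnonneg i).lt_of_ne (hne i).symm

end Orthant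

section LogProd

variable {n : ℕ}

def logProd (x : Fin n → ℝ) : ℝ := Real.log (∏ i, x i)

lemma logProd_eq_sum_log {x : Fin n → ℝ} (hx : x ∈ Gpos n) :
    logProd x = ∑ i, Real.log (x i) :=
  Real.log_prod fun i _ => (hx i).ne'

lemma logProd_comp_perm (σ : Equiv.Perm (Fin n)) (x : Fin n → ℝ) :
    logProd (x ∘ σ) = logProd x := by
  simp only [logProd, Function.comp_apply, Equiv.prod_comp σ x]

lemma logProd_smul {t : ℝ} (ht : 0 < t) {x : Fin n → ℝ} (hx : x ∈ Gpos n) :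
    logProd (t • x) = n * Real.log t + logProd x := by
  rw [logProd_eq_sum_log (smul_mem_Gpos ht hx), logProd_eq_sum_log hx]
  simp [Real.log_mul ht.ne' (hx _).ne', Finset.sum_add_distrib]

lemma contDiffOn_logProd : ContDiffOn ℝ (⊤ : ℕ∞) logProd (Gpos n) := fun _ hx =>
  ((contDiff_prod fun i _ => contDiff_apply ℝ ℝ i).contDiffAt.log
    (Finset.prod_pos fun i _ => hx i).ne').contDiffWithinAt

lemma hasFDerivAt_logProd {x : Fin n → ℝ} (hx : x ∈ Gpos n) :
    HasFDerivAt logProd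
      (∑ i, (x i)⁻¹ • (ContinuousLinearMap.proj i : (Fin n → ℝ) →L[ℝ] ℝ)) x := by
  have hsum : HasFDerivAt (fun y : Fin n → ℝ => ∑ i, Real.log (y i))
      (∑ i, (x i)⁻¹ • (ContinuousLinearMap.proj i : (Fin n → ℝ) →L[ℝ] ℝ)) x :=
    HasFDerivAt.fun_sum fun i _ => (hasFDerivAt_apply i x).log (hx i).ne'
  exact hsum.congr_of_eventuallyEq
    (eventually_of_mem (isOpen_Gpos.mem_nhds hx) fun y hy => logProd_eq_sum_log hy)

lemma concaveOn_logProd : ConcaveOn ℝ (Gpos n) logProd := by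
  refine (concaveOn_finset_sum convex_Gpos fun i _ => ?_).congr
    fun x hx => (logProd_eq_sum_log hx).symm
  exact (strictConcaveOn_log_Ioi.concaveOn.comp_linearMap
    (LinearMap.proj i : (Fin n → ℝ) →ₗ[ℝ] ℝ)).subset
    (fun x (hx : x ∈ Gpos n) => hx i) convex_Gpos

lemma tendsto_logProd_atBot {x₀ : Fin n → ℝ} (hx₀ : x₀ ∈ frontier (Gpos n)) :
    Tendsto logProd (𝓝[Gpos n] x₀) atBot := by
  obtain ⟨i, hi⟩ := exists_eq_zero_of_mem_frontier_Gpos hx₀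
  have hprod : Tendsto (fun x : Fin n → ℝ => ∏ i, x i) (𝓝[Gpos n] x₀) (𝓝[>] 0) := by
    refine tendsto_nhdsWithin_iff.2 ⟨?_, eventually_nhdsWithin_of_forall
      fun x hx => Finset.prod_pos fun i _ => hx i⟩
    have := ((continuous_finsetProd Finset.univ fun i _ => continuous_apply i).tendsto
      x₀).mono_left (nhdsWithin_le_nhds (s := Gpos n))
    rwa [Finset.prod_eq_zero (Finset.mem_univ i) hi] at this
  exact Real.tendsto_log_nhdsGT_zero.comp hprod

end LogProd

section LinearPullback

variable {n : ℕ} (L : (Fin n → ℝ) →L[ℝ] (Fin n → ℝ))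

lemma tendsto_logProd_comp_atBot {x₀ : Fin n → ℝ} (hx₀ : x₀ ∈ frontier (L ⁻¹' Gpos n)) :
    Tendsto (logProd ∘ L) (𝓝[L ⁻¹' Gpos n] x₀) atBot :=
  (tendsto_logProd_atBot (L.continuous.frontier_preimage_subset _ hx₀)).comp
    (L.continuous.continuousWithinAt.tendsto_nhdsWithin (Set.mapsTo_preimage _ _))

lemma tendsto_logProd_comp_smul_atTop (hn : 0 < n) {x : Fin n → ℝ} (hx : L x ∈ Gpos n) :
    Tendsto (fun t : ℝ => logProd (L (t • x))) atTop atTop := by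
  have hlog : Tendsto (fun t : ℝ => n * Real.log t + logProd (L x)) atTop atTop :=
    (Real.tendsto_log_atTop.const_mul_atTop (by positivity)).atTop_add tendsto_const_nhds
  refine hlog.congr' ?_
  filter_upwards [eventually_gt_atTop 0] with t ht
  rw [map_smul, logProd_smul ht hx]

lemma fderiv_logProd_comp_apply {x : Fin n → ℝ} (hx : L x ∈ Gpos n) (v : Fin n → ℝ) :
    fderiv ℝ (logProd ∘ L) x v = ∑ k, (L x k)⁻¹ * L v k := by
  rw [((hasFDerivAt_logProd hx).comp x L.hasFDerivAt).fderiv]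
  simp

end LinearPullback

section Tmap

variable {n : ℕ}

lemma inv_natCast_sub_one_pos (hn : 2 ≤ n) : 0 < ((n : ℝ) - 1)⁻¹ := by
  have : (2 : ℝ) ≤ n := by exact_mod_cast hn
  exact inv_pos.2 (by linarith)

lemma Tmap_apply (x : Fin n → ℝ) (k : Fin n) :
    Tmap n x k = ((n : ℝ) - 1)⁻¹ * (∑ i, x i - x k) := by
  rw [Tmap, Finset.sum_erase_eq_sub (Finset.mem_univ k)]

def Tlin (n : ℕ) : (Fin n → ℝ) →L[ℝ] (Fin n → ℝ) :=
  LinearMap.toContinuousLinearMap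
    { toFun := Tmap n
      map_add' := fun x y => by
        ext k; simp only [Tmap_apply, Pi.add_apply, Finset.sum_add_distrib]; ring
      map_smul' := fun c x => by
        ext k
        simp only [Tmap_apply, Pi.smul_apply, smul_eq_mul, ← Finset.mul_sum, RingHom.id_apply]
        ring }

lemma coe_Tlin : ⇑(Tlin n) = Tmap n := rfl

lemma Tmap_comp_perm (σ : Equiv.Perm (Fin n)) (x : Fin n → ℝ) :
    Tmap n (x ∘ σ) = Tmap n x ∘ σ := by
  ext k; simp only [Tmap_apply, Function.comp_apply, Equiv.sum_comp σ x]

lemma Tmap_single (i k : Fin n) :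
    Tmap n (Pi.single i 1) k = if k = i then 0 else ((n : ℝ) - 1)⁻¹ := by
  rw [Tmap_apply]
  split_ifs with h <;> simp [h]

lemma Tmap_mem_Gpos (hn : 2 ≤ n) {x : Fin n → ℝ} (hx : x ∈ Gpos n) : Tmap n x ∈ Gpos n := by
  have : Nontrivial (Fin n) := Fin.nontrivial_iff_two_le.2 hn
  intro k
  exact mul_pos (inv_natCast_sub_one_pos hn)
    (Finset.sum_pos (fun i _ => hx i) Finset.univ_nontrivial.erase_nonempty)

end Tmap

section Structural

variable {n : ℕ}

lemma coneData_Tmap_preimage (hn : 2 ≤ n) : ConeData n (Tmap n ⁻¹' Gpos n) where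
  isOpen := isOpen_Gpos.preimage (Tlin n).continuous
  convex := convex_Gpos.linear_preimage (Tlin n : (Fin n → ℝ) →ₗ[ℝ] (Fin n → ℝ))
  cone lam hlam t ht := by
    change Tlin n (t • lam) ∈ Gpos n
    rw [map_smul]
    exact smul_mem_Gpos ht hlam
  symm σ lam hlam := by
    change Tmap n (lam ∘ σ) ∈ Gpos n
    rw [Tmap_comp_perm]
    exact comp_perm_mem_Gpos σ hlam
  proper h := by
    have h0 : Tlin n 0 ∈ Gpos n := (Set.eq_univ_iff_forall.1 h) 0
    rw [map_zero] at h0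
    exact lt_irrefl 0 (h0 ⟨0, by omega⟩)
  pos_subset _ := Tmap_mem_Gpos hn

lemma fderiv_logProd_comp_Tmap_single_pos (hn : 2 ≤ n) {lam : Fin n → ℝ}
    (hlam : Tmap n lam ∈ Gpos n) (i : Fin n) :
    0 < fderiv ℝ (logProd ∘ Tmap n) lam (Pi.single i 1) := by
  have : Nontrivial (Fin n) := Fin.nontrivial_iff_two_le.2 hn
  obtain ⟨j, hji⟩ := exists_ne i
  rw [← coe_Tlin, fderiv_logProd_comp_apply _ hlam]
  simp only [coe_Tlin, Tmap_single]
  refine Finset.sum_pos' (fun k _ => ?_) ⟨j, Finset.mem_univ j, ?_⟩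
  · split_ifs
    · simp
    · exact mul_nonneg (inv_nonneg.2 (hlam k).le) (inv_natCast_sub_one_pos hn).le
  · rw [if_neg hji]
    exact mul_pos (inv_pos.2 (hlam j)) (inv_natCast_sub_one_pos hn)

lemma operatorData_logProd_comp_Tmap (hn : 2 ≤ n) :
    OperatorData n (Tmap n ⁻¹' Gpos n) (logProd ∘ Tmap n) where
  smooth := contDiffOn_logProd.comp (Tlin n).contDiff.contDiffOn (Set.mapsTo_preimage _ _)
  symm σ lam _ := by simp only [Function.comp_apply, Tmap_comp_perm, logProd_comp_perm]
  deriv_pos _ hlam := fderiv_logProd_comp_Tmap_single_pos hn hlam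
  concave := concaveOn_logProd.comp_linearMap (Tlin n : (Fin n → ℝ) →ₗ[ℝ] (Fin n → ℝ))
  rays σ _ _ hlam :=
    (tendsto_logProd_comp_smul_atTop (Tlin n) (by omega) hlam).eventually_gt_atTop σ

end Structural

/-- the operator of the quaternionic Monge–Ampère equation for
`(n-1)`-quaternionic plurisubharmonic functions, `f = log ∏ₖ T(λ)ₖ` on
`Γ = T⁻¹(Γₙ)`, satisfies all the structural conditions (C1)–(C3); moreover
`f → -∞` at `∂Γ` and `f(tλ) → +∞` as `t → ∞` for every `λ ∈ Γ`. -/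
theorem statement18 (n : ℕ) (hn : 2 ≤ n)
    (Γ : Set (Fin n → ℝ)) (hΓdef : Γ = Tmap n ⁻¹' Gpos n)
    (f : (Fin n → ℝ) → ℝ) (hfdef : f = fun lam => Real.log (∏ k, Tmap n lam k)) :
    ConeData n Γ ∧ OperatorData n Γ f ∧
    (∀ lam₀ ∈ frontier Γ, Tendsto f (𝓝[Γ] lam₀) atBot) ∧
    (∀ lam ∈ Γ, Tendsto (fun t : ℝ => f (t • lam)) atTop atTop) := by
  subst hΓdef hfdef
  exact ⟨coneData_Tmap_preimage hn, operatorData_logProd_comp_Tmap hn,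
    fun _ hlam₀ => tendsto_logProd_comp_atBot (Tlin n) hlam₀,
    fun _ hlam => tendsto_logProd_comp_smul_atTop (Tlin n) (by omega) hlam⟩
end
end
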